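/- arXiv:1512.00780 — 3 statements merged into one kernel-verified Lean document; each statement's English description precedes it below -/
import Mathlib

section
/- Let P and Q be coprime polynomials with integer coefficients of degrees at most m and n respectively, and let ξ be a real number with ξ·P(ξ)·Q(ξ) ≠ 0. Then there exists a constant c > 0 depending only on m, n, ξ such that either |P(ξ)| ≥ c·H(P)^{-(n-1)}·H(Q)^{-m} or |Q(ξ)| ≥ c·H(P)^{-n}·H(Q)^{-(m-1)}. -/
open Polynomial Filter

/-- Height of an integer polynomial: the maximum absolute value of its coefficients. -/
noncomputable def polyHeight (P : Polynomial ℤ) : ℝ :=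
  ((P.support.sup fun i => (P.coeff i).natAbs : ℕ) : ℝ)

/-- `P` and `Q` have no common non-constant factor in `ℤ[X]`. -/
def CoprimePoly (P Q : Polynomial ℤ) : Prop :=
  ∀ d : Polynomial ℤ, d ∣ P → d ∣ Q → d.natDegree = 0

/-- The exponent `w_n(ξ)`. -/
noncomputable def wExp (n : ℕ) (ξ : ℝ) : EReal :=
  sSup {x : EReal | ∃ w : ℝ, x = (w : EReal) ∧
    {P : Polynomial ℤ | P.natDegree ≤ n ∧ 0 < |Polynomial.aeval ξ P| ∧
      |Polynomial.aeval ξ P| ≤ (polyHeight P) ^ (-w)}.Infinite}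

/-- The uniform exponent `ŵ_n(ξ)`. -/
noncomputable def whExp (n : ℕ) (ξ : ℝ) : EReal :=
  sSup {x : EReal | ∃ w : ℝ, x = (w : EReal) ∧
    ∀ᶠ H : ℝ in atTop, ∃ P : Polynomial ℤ, P.natDegree ≤ n ∧ polyHeight P ≤ H ∧
      0 < |Polynomial.aeval ξ P| ∧ |Polynomial.aeval ξ P| ≤ H ^ (-w)}

/-- The exponent `w*_n(ξ)` of approximation by algebraic numbers of degree at most `n`;
the height of an algebraic number is the height of its irreducible defining polynomial. -/
noncomputable def wStarExp (n : ℕ) (ξ : ℝ) : EReal :=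
  sSup {x : EReal | ∃ w : ℝ, x = (w : EReal) ∧
    {α : ℝ | ∃ P : Polynomial ℤ, Irreducible P ∧ Polynomial.aeval α P = 0 ∧
      P.natDegree ≤ n ∧ 0 < |ξ - α| ∧ |ξ - α| ≤ (polyHeight P) ^ (-w - 1)}.Infinite}

/-- The uniform exponent `ŵ*_n(ξ)`. -/
noncomputable def whStarExp (n : ℕ) (ξ : ℝ) : EReal :=
  sSup {x : EReal | ∃ w : ℝ, x = (w : EReal) ∧
    ∀ᶠ H : ℝ in atTop, ∃ α : ℝ, ∃ P : Polynomial ℤ, Irreducible P ∧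
      Polynomial.aeval α P = 0 ∧ P.natDegree ≤ n ∧ polyHeight P ≤ H ∧
      0 < |ξ - α| ∧ |ξ - α| ≤ (polyHeight P)⁻¹ * H ^ (-w)}

/-!
Write `p = deg P`, `q = deg Q`. The adjugate of the Sylvester matrix gives
`Res(P, Q) = P * A + Q * B` with `deg A < q`, `deg B < p`, whose coefficients are cofactors
of the Sylvester matrix. Expanding a cofactor column by column bounds the coefficients of `A`
by `H(P)^(q-1) H(Q)^p` and those of `B` by `H(P)^q H(Q)^(p-1)`, up to a factor depending only
on `p + q`. Coprimality makes `Res(P, Q)` a nonzero integer, so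
`1 ≤ |A(ξ)| |P(ξ)| + |B(ξ)| |Q(ξ)|` and one of the two terms is at least `1/2`.
-/

open scoped Nat

namespace Matrix

variable {ι R : Type*} [Fintype ι] [DecidableEq ι] [CommRing R] [LinearOrder R]
  [IsStrictOrderedRing R]

/-- In the expansion of `adjugate A i j = det (A.updateRow j (Pi.single i 1))` only the
permutations sending `i` to `j` survive, and those never read column `i` of `A`. -/
theorem abs_adjugate_mul_le_factorial_mul_prod (A : Matrix ι ι R) {b : ι → R}
    (hb : ∀ r c, |A r c| ≤ b c) (i j : ι) :
    |A.adjugate i j| * b i ≤ (Fintype.card ι)! * ∏ c, b c := by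
  have hb0 : ∀ c, 0 ≤ b c := fun c => (abs_nonneg _).trans (hb j c)
  have hterm : ∀ σ : Equiv.Perm ι,
      |∏ c, A.updateRow j (Pi.single i 1) (σ c) c| * b i ≤ ∏ c, b c := by
    intro σ
    by_cases hσ : σ i = j
    · rw [← Finset.mul_prod_erase _ _ (Finset.mem_univ i),
        ← Finset.mul_prod_erase _ b (Finset.mem_univ i), hσ, updateRow_self,
        Pi.single_eq_same, one_mul, Finset.abs_prod, mul_comm]
      refine mul_le_mul_of_nonneg_left
        (Finset.prod_le_prod (fun c _ => abs_nonneg _) fun c hc => ?_) (hb0 i)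
      rw [updateRow_ne (fun h => (Finset.ne_of_mem_erase hc) (σ.injective (h.trans hσ.symm)))]
      exact hb _ _
    · rw [Finset.prod_eq_zero (Finset.mem_univ (σ.symm j)) (by
        rw [Equiv.apply_symm_apply, updateRow_self, Pi.single_eq_of_ne]
        rintro rfl
        exact hσ (σ.apply_symm_apply _)), abs_zero, zero_mul]
      exact Finset.prod_nonneg fun c _ => hb0 c
  calc |A.adjugate i j| * b i
      ≤ (∑ σ : Equiv.Perm ι, |∏ c, A.updateRow j (Pi.single i 1) (σ c) c|) * b i := by
        rw [adjugate_apply, det_apply]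
        gcongr
        · exact hb0 i
        refine (Finset.abs_sum_le_sum_abs _ _).trans_eq (Finset.sum_congr rfl fun σ _ => ?_)
        rcases Int.units_eq_one_or (Equiv.Perm.sign σ) with h | h <;> simp [h]
    _ ≤ ∑ _σ : Equiv.Perm ι, ∏ c, b c := by
        rw [Finset.sum_mul]
        exact Finset.sum_le_sum fun σ _ => hterm σ
    _ = (Fintype.card ι)! * ∏ c, b c := by
        simp [Fintype.card_perm]

end Matrix

namespace Polynomial

variable {R : Type*} [CommRing R] {m n : ℕ}

theorem exists_sylvesterMap_eq_zero_of_resultant_eq_zero [IsDomain R] {f g : R[X]}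
    (hf : f.natDegree ≤ m) (hg : g.natDegree ≤ n) (h : f.resultant g m n = 0) :
    ∃ x ≠ 0, sylvesterMap f g hf hg x = 0 := by
  obtain ⟨v, hv0, hv⟩ := Matrix.exists_mulVec_eq_zero_iff.mpr h
  let b := ((degreeLT.basis R m).prod (degreeLT.basis R n)).reindex finSumFinEquiv
  have e : sylvesterMap f g hf hg =
      Matrix.toLin b (degreeLT.basis R (m + n)) (sylvester f g m n) := by
    rw [← toMatrix_sylvesterMap' f g hf hg]
    exact (Matrix.toLin_toMatrix _ _ _).symm
  refine ⟨b.equivFun.symm v, b.equivFun.symm.map_ne_zero_iff.mpr hv0, ?_⟩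
  have hrepr : ⇑(b.repr (b.equivFun.symm v)) = v := b.equivFun.apply_symm_apply v
  rw [e, Matrix.toLin_apply, hrepr, hv]
  simp

theorem degreeLT.basisProd_repr_castAdd (x : R[X]_m × R[X]_n) (k : Fin m) :
    (degreeLT.basisProd R m n).repr x (k.castAdd n) = (x.1 : R[X]).coeff k := by
  simp [degreeLT.basisProd]

theorem degreeLT.basisProd_repr_natAdd (x : R[X]_m × R[X]_n) (k : Fin n) :
    (degreeLT.basisProd R m n).repr x (k.natAdd m) = (x.2 : R[X]).coeff k := by
  simp [degreeLT.basisProd]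

theorem repr_adjSylvester_basis (f g : R[X]) (i j : Fin (m + n)) :
    (degreeLT.basisProd R m n).repr (adjSylvester f g (degreeLT.basis R (m + n) i)) j =
      (sylvester f g m n).adjugate j i := by
  refine (congrFun
    (Matrix.repr_toLin (degreeLT.basis R (m + n)) (degreeLT.basisProd R m n) _ _) j).trans ?_
  rw [Module.Basis.repr_self, Finsupp.single_eq_pi_single, Matrix.mulVec_single_one]
  rfl

end Polynomial

theorem CoprimePoly.isRelPrime_primPart {P Q : ℤ[X]} (h : CoprimePoly P Q) :
    IsRelPrime P.primPart Q := by
  intro d hdP hdQ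
  have hd := eq_C_of_natDegree_eq_zero (h d (hdP.trans P.primPart_dvd) hdQ)
  rw [hd] at hdP ⊢
  exact isUnit_C.mpr (P.isPrimitive_primPart _ hdP)

theorem CoprimePoly.resultant_ne_zero {P Q : ℤ[X]} (h : CoprimePoly P Q) (hP : P ≠ 0) :
    P.resultant Q ≠ 0 := by
  intro hres
  obtain ⟨⟨a, b⟩, hab0, hab⟩ :=
    exists_sylvesterMap_eq_zero_of_resultant_eq_zero le_rfl le_rfl hres
  have hrel : P * b + Q * a = 0 := congrArg Subtype.val hab
  have ha : (a : ℤ[X]) = 0 := by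
    by_contra ha
    have hdvd : P.primPart ∣ Q * a :=
      P.primPart_dvd.trans ⟨-b, by linear_combination hrel⟩
    have hle := natDegree_le_of_dvd (h.isRelPrime_primPart.dvd_of_dvd_mul_left hdvd) ha
    have hlt := (natDegree_lt_iff_degree_lt ha).mpr (mem_degreeLT.mp a.2)
    rw [natDegree_primPart] at hle
    omega
  have hb : (b : ℤ[X]) = 0 := by
    rw [ha, mul_zero, add_zero] at hrel
    exact (mul_eq_zero.mp hrel).resolve_left hP
  exact hab0 (Prod.ext (Subtype.ext ha) (Subtype.ext hb))

theorem abs_coeff_le_polyHeight (P : ℤ[X]) (k : ℕ) : |(P.coeff k : ℝ)| ≤ polyHeight P := by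
  rw [polyHeight, ← Int.cast_abs, Int.abs_eq_natAbs, Int.cast_natCast, Nat.cast_le]
  by_cases hk : k ∈ P.support
  · exact Finset.le_sup (f := fun i => (P.coeff i).natAbs) hk
  · simp [notMem_support_iff.mp hk]

theorem polyHeight_nonneg (P : ℤ[X]) : 0 ≤ polyHeight P := Nat.cast_nonneg _

theorem one_le_polyHeight {P : ℤ[X]} (hP : P ≠ 0) : 1 ≤ polyHeight P := by
  refine le_trans ?_ (abs_coeff_le_polyHeight P P.natDegree)
  exact_mod_cast Int.one_le_abs (leadingCoeff_ne_zero.mpr hP)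

theorem polyHeight_C (a : ℤ) : polyHeight (C a) = |(a : ℝ)| := by
  rcases eq_or_ne a 0 with rfl | ha
  · simp [polyHeight]
  · rw [polyHeight, support_C ha, Finset.sup_singleton, coeff_C_zero, Nat.cast_natAbs,
      Int.cast_abs]

theorem abs_sylvester_le (f g : ℤ[X]) (m n : ℕ) (r c : Fin (m + n)) :
    |(sylvester f g m n r c : ℝ)| ≤
      Fin.addCases (fun _ => polyHeight g) (fun _ => polyHeight f) c := by
  induction c using Fin.addCases with
  | left j =>
    simp only [sylvester, Matrix.of_apply, Fin.addCases_left]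
    split_ifs
    · exact abs_coeff_le_polyHeight g _
    · simpa using polyHeight_nonneg g
  | right j =>
    simp only [sylvester, Matrix.of_apply, Fin.addCases_right]
    split_ifs
    · exact abs_coeff_le_polyHeight f _
    · simpa using polyHeight_nonneg f

theorem exists_mul_add_mul_eq_C_resultant_with_abs_coeff_le {m n : ℕ} {f g : ℤ[X]}
    (hf : f.natDegree ≤ m) (hg : g.natDegree ≤ n) (h : 0 < m + n) :
    ∃ a b : ℤ[X], a.degree < n ∧ b.degree < m ∧ f * a + g * b = C (f.resultant g m n) ∧
      (∀ k < n, |(a.coeff k : ℝ)| * polyHeight f ≤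
        (m + n)! * (polyHeight f ^ n * polyHeight g ^ m)) ∧
      (∀ k < m, |(b.coeff k : ℝ)| * polyHeight g ≤
        (m + n)! * (polyHeight f ^ n * polyHeight g ^ m)) := by
  -- `degreeLT.basis ℤ (m + n) i₀` is the constant polynomial `1`
  set i₀ : Fin (m + n) := ⟨0, h⟩
  set y := adjSylvester f g (degreeLT.basis ℤ (m + n) i₀)
  have hy : f * y.2 + g * y.1 = C (f.resultant g m n) := by
    have := congrArg Subtype.val <| LinearMap.congr_fun
      (sylveserMap_comp_adjSylvester f g hf hg) (degreeLT.basis ℤ (m + n) i₀)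
    simpa [i₀, Algebra.smul_def] using this
  set b : Fin (m + n) → ℝ := Fin.addCases (fun _ => polyHeight g) (fun _ => polyHeight f)
  have hprod : ∏ c, b c = polyHeight f ^ n * polyHeight g ^ m := by
    simp [b, Fin.prod_univ_add, mul_comm]
  have hadj : ∀ c,
      |((sylvester f g m n).adjugate c i₀ : ℝ)| * b c ≤ (m + n)! * ∏ c, b c := by
    intro c
    have := Matrix.abs_adjugate_mul_le_factorial_mul_prod
      ((Int.castRingHom ℝ).mapMatrix (sylvester f g m n)) (abs_sylvester_le f g m n) c i₀
    rwa [← RingHom.map_adjugate, Fintype.card_fin] at this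
  refine ⟨y.2, y.1, mem_degreeLT.mp y.2.2, mem_degreeLT.mp y.1.2, hy, fun k hk => ?_,
    fun k hk => ?_⟩
  · have := hadj (Fin.natAdd m ⟨k, hk⟩)
    rw [hprod, ← repr_adjSylvester_basis, degreeLT.basisProd_repr_natAdd] at this
    simpa only [b, Fin.addCases_right] using this
  · have := hadj (Fin.castAdd n ⟨k, hk⟩)
    rw [hprod, ← repr_adjSylvester_basis, degreeLT.basisProd_repr_castAdd] at this
    simpa only [b, Fin.addCases_left] using this

theorem abs_aeval_le_of_degree_lt {a : ℤ[X]} {N : ℕ} (ha : a.degree < N) {K : ℝ}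
    (hK : ∀ k < N, |(a.coeff k : ℝ)| ≤ K) (ξ : ℝ) :
    |aeval ξ a| ≤ N * K * max 1 |ξ| ^ N := by
  rcases eq_or_ne a 0 with rfl | ha0
  · rcases N.eq_zero_or_pos with rfl | hN
    · simp
    · have := hK 0 hN
      simp only [coeff_zero, Int.cast_zero, abs_zero] at this
      simp only [map_zero, abs_zero]
      positivity
  rw [aeval_eq_sum_range' ((natDegree_lt_iff_degree_lt ha0).mpr ha)]
  calc |∑ k ∈ Finset.range N, a.coeff k • ξ ^ k|
      ≤ ∑ k ∈ Finset.range N, |(a.coeff k : ℝ)| * |ξ| ^ k := by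
        refine (Finset.abs_sum_le_sum_abs _ _).trans_eq (Finset.sum_congr rfl fun k _ => ?_)
        rw [zsmul_eq_mul, abs_mul, abs_pow]
    _ ≤ ∑ _k ∈ Finset.range N, K * max 1 |ξ| ^ N := by
        refine Finset.sum_le_sum fun k hk => ?_
        have hk := Finset.mem_range.mp hk
        gcongr
        · exact (abs_nonneg _).trans (hK k hk)
        · exact hK k hk
        · calc |ξ| ^ k ≤ max 1 |ξ| ^ k := by gcongr; exact le_max_right _ _
            _ ≤ max 1 |ξ| ^ N := pow_le_pow_right₀ (le_max_left _ _) hk.le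
    _ = N * K * max 1 |ξ| ^ N := by simp [mul_assoc]

theorem abs_aeval_eq_polyHeight_of_natDegree_eq_zero {P : ℤ[X]} (hP : P.natDegree = 0)
    (ξ : ℝ) :
    |aeval ξ P| = polyHeight P := by
  rw [eq_C_of_natDegree_eq_zero hP, aeval_C, polyHeight_C, algebraMap_int_eq, eq_intCast]

theorem one_le_mul_abs_aeval_div_polyHeight_add {P Q : ℤ[X]} (hP : P ≠ 0) (hQ : Q ≠ 0)
    (h : CoprimePoly P Q) (ξ : ℝ) :
    1 ≤ (P.natDegree + Q.natDegree + 1)! * max 1 |ξ| ^ (P.natDegree + Q.natDegree) *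
      (polyHeight P ^ Q.natDegree * polyHeight Q ^ P.natDegree) *
      (|aeval ξ P| / polyHeight P + |aeval ξ Q| / polyHeight Q) := by
  set p := P.natDegree
  set q := Q.natDegree
  have hHP := one_le_polyHeight hP
  have hHQ := one_le_polyHeight hQ
  rcases Nat.eq_zero_or_pos (p + q) with hpq | hpq
  · rw [abs_aeval_eq_polyHeight_of_natDegree_eq_zero (show p = 0 by omega),
      abs_aeval_eq_polyHeight_of_natDegree_eq_zero (show q = 0 by omega), hpq,
      show p = 0 by omega, show q = 0 by omega, div_self (by positivity),
      div_self (by positivity)]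
    norm_num
  obtain ⟨a, b, ha, hb, hab, hKa, hKb⟩ :=
    exists_mul_add_mul_eq_C_resultant_with_abs_coeff_le (f := P) (g := Q) le_rfl le_rfl hpq
  set M := max 1 |ξ|
  set X := polyHeight P ^ q * polyHeight Q ^ p
  have hA := abs_aeval_le_of_degree_lt ha
    (fun k hk => (le_div_iff₀ (by positivity)).mpr (hKa k hk)) ξ
  have hB := abs_aeval_le_of_degree_lt hb
    (fun k hk => (le_div_iff₀ (by positivity)).mpr (hKb k hk)) ξ
  have hres : 1 ≤ |(P.resultant Q : ℝ)| := by
    exact_mod_cast Int.one_le_abs (h.resultant_ne_zero hP)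
  have heval : (P.resultant Q : ℝ) = aeval ξ P * aeval ξ a + aeval ξ Q * aeval ξ b := by
    simpa using congrArg (aeval ξ) hab.symm
  have hfactor : ∀ N ≤ p + q, (N : ℝ) * (p + q)! * M ^ N ≤ (p + q + 1)! * M ^ (p + q) := by
    intro N hN
    rw [Nat.factorial_succ, Nat.cast_mul]
    gcongr
    · exact_mod_cast hN.trans (Nat.le_succ _)
    · exact le_max_left _ _
  calc 1 ≤ |aeval ξ P| * |aeval ξ a| + |aeval ξ Q| * |aeval ξ b| := by
        rw [← abs_mul, ← abs_mul]
        exact hres.trans (heval ▸ abs_add_le _ _)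
    _ ≤ |aeval ξ P| * (q * ((p + q)! * X / polyHeight P) * M ^ q) +
          |aeval ξ Q| * (p * ((p + q)! * X / polyHeight Q) * M ^ p) := by gcongr
    _ = (q * (p + q)! * M ^ q) * X * (|aeval ξ P| / polyHeight P) +
          (p * (p + q)! * M ^ p) * X * (|aeval ξ Q| / polyHeight Q) := by ring
    _ ≤ ((p + q + 1)! * M ^ (p + q)) * X * (|aeval ξ P| / polyHeight P) +
          ((p + q + 1)! * M ^ (p + q)) * X * (|aeval ξ Q| / polyHeight Q) := by
        gcongr ?_ * _ * _ + ?_ * _ * _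
        · exact hfactor q (by omega)
        · exact hfactor p (by omega)
    _ = _ := by ring

theorem Real.rpow_neg_natCast_sub_one {x : ℝ} (hx : 0 < x) (n : ℕ) :
    x ^ (-((n : ℝ) - 1)) = x / x ^ n := by
  rw [neg_sub, Real.rpow_sub hx, Real.rpow_one, Real.rpow_natCast]

theorem le_or_le_of_one_le_mul_add {D x y a b : ℝ} (hD : 0 < D) (ha : 0 < a) (hb : 0 < b)
    (h : 1 ≤ D * (x / a + y / b)) : a / (2 * D) ≤ x ∨ b / (2 * D) ≤ y := by
  by_contra! hlt
  obtain ⟨hx, hy⟩ := hlt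
  rw [lt_div_iff₀ (by positivity)] at hx hy
  have hxa : D * (x / a) < 1 / 2 := by
    rw [mul_div_assoc', div_lt_iff₀ ha]
    linarith
  have hyb : D * (y / b) < 1 / 2 := by
    rw [mul_div_assoc', div_lt_iff₀ hb]
    linarith
  linarith

theorem stmt0 (m n : ℕ) (ξ : ℝ) :
    ∃ c : ℝ, 0 < c ∧ ∀ P Q : Polynomial ℤ,
      P.natDegree ≤ m → Q.natDegree ≤ n → CoprimePoly P Q →
      ξ * Polynomial.aeval ξ P * Polynomial.aeval ξ Q ≠ 0 →
      c * (polyHeight P) ^ (-((n : ℝ) - 1)) * (polyHeight Q) ^ (-(m : ℝ)) ≤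
          |Polynomial.aeval ξ P| ∨
        c * (polyHeight P) ^ (-(n : ℝ)) * (polyHeight Q) ^ (-((m : ℝ) - 1)) ≤
          |Polynomial.aeval ξ Q| := by
  set C : ℝ := (m + n + 1)! * max 1 |ξ| ^ (m + n)
  refine ⟨1 / (2 * C), by positivity, fun P Q hPm hQn hcop hξ => ?_⟩
  have hP : P ≠ 0 := by rintro rfl; simp at hξ
  have hQ : Q ≠ 0 := by rintro rfl; simp at hξ
  have hHP := one_le_polyHeight hP
  have hHQ := one_le_polyHeight hQ
  set D := C * (polyHeight P ^ n * polyHeight Q ^ m)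
  have hD : 1 ≤ D * (|aeval ξ P| / polyHeight P + |aeval ξ Q| / polyHeight Q) := by
    refine (one_le_mul_abs_aeval_div_polyHeight_add hP hQ hcop ξ).trans ?_
    gcongr
    simp only [D, C]
    gcongr
    all_goals first | omega | exact le_max_left 1 |ξ|
  rw [Real.rpow_neg_natCast_sub_one (by positivity), Real.rpow_neg_natCast, zpow_neg,
    zpow_natCast, Real.rpow_neg_natCast, zpow_neg, zpow_natCast,
    Real.rpow_neg_natCast_sub_one (by positivity)]
  refine (le_or_le_of_one_le_mul_add (by positivity) (by positivity) (by positivity) hD).imp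
    (le_of_eq_of_le ?_) (le_of_eq_of_le ?_)
  all_goals
    simp only [D]
    field_simp
end

section
/- Let n ≥ 2 be an integer. Suppose real numbers w ≥ ŵ ≥ n satisfy both ŵ ≤ n·w/(w - n + 1) and w ≥ (n-1)(ŵ² - ŵ)/(1 + (n-2)ŵ). Then ŵ ≤ n - 1/2 + sqrt(n² - 2n + 5/4). -/
/-! Clearing denominators, the first bound reads `w (ŵ - n) ≤ (n - 1) ŵ` and the second
`(n - 1) ŵ (ŵ - 1) ≤ w (1 + (n - 2) ŵ)`. Multiplying the second by `ŵ - n ≥ 0` and feeding in the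
first eliminates `w` and leaves `(ŵ - 1)(ŵ - n) ≤ 1 + (n - 2) ŵ`, i.e. the quadratic inequality
`ŵ² - (2n - 1) ŵ + (n - 1) ≤ 0`, whose larger root is `n - 1/2 + √(n² - 2n + 5/4)`. -/

lemma le_add_sqrt_of_sq_sub_mul_add_nonpos {x p q : ℝ} (h : x ^ 2 - 2 * p * x + q ≤ 0) :
    x ≤ p + Real.sqrt (p ^ 2 - q) := by
  have hsq : (x - p) ^ 2 ≤ p ^ 2 - q := by linarith
  linarith [le_abs_self (x - p), Real.abs_le_sqrt hsq]

lemma sq_sub_mul_add_nonpos_of_bounds {n w wh : ℝ} (hn : 2 ≤ n) (hwh : n ≤ wh)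
    (hA : w * (wh - n) ≤ (n - 1) * wh)
    (hB : (n - 1) * (wh ^ 2 - wh) ≤ w * (1 + (n - 2) * wh)) :
    wh ^ 2 - 2 * (n - 1 / 2) * wh + (n - 1) ≤ 0 := by
  have hD : 0 ≤ 1 + (n - 2) * wh := by nlinarith
  have hpos : 0 < (n - 1) * wh := by nlinarith
  have key : (n - 1) * wh * ((wh - 1) * (wh - n)) ≤ (n - 1) * wh * (1 + (n - 2) * wh) :=
    calc (n - 1) * wh * ((wh - 1) * (wh - n)) = (n - 1) * (wh ^ 2 - wh) * (wh - n) := by ring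
      _ ≤ w * (1 + (n - 2) * wh) * (wh - n) := by gcongr
      _ = w * (wh - n) * (1 + (n - 2) * wh) := by ring
      _ ≤ (n - 1) * wh * (1 + (n - 2) * wh) := by gcongr
  nlinarith [le_of_mul_le_mul_left key hpos]

theorem stmt7 (n : ℕ) (hn : 2 ≤ n) (w wh : ℝ) (h1 : wh ≤ w) (h2 : (n : ℝ) ≤ wh)
    (h3 : wh ≤ n * w / (w - n + 1))
    (h4 : ((n : ℝ) - 1) * (wh ^ 2 - wh) / (1 + ((n : ℝ) - 2) * wh) ≤ w) :
    wh ≤ (n : ℝ) - 1 / 2 + Real.sqrt ((n : ℝ) ^ 2 - 2 * n + 5 / 4) := by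
  have hn' : (2 : ℝ) ≤ n := by exact_mod_cast hn
  have hA : w * (wh - n) ≤ (n - 1) * wh := by
    have := (le_div_iff₀ (by linarith : (0 : ℝ) < w - n + 1)).mp h3
    linarith
  have hB := (div_le_iff₀ (by nlinarith : (0 : ℝ) < 1 + ((n : ℝ) - 2) * wh)).mp h4
  have hroot := le_add_sqrt_of_sq_sub_mul_add_nonpos (sq_sub_mul_add_nonpos_of_bounds hn' h2 hA hB)
  convert hroot using 3
  ring
end

section
/- Suppose real numbers w ≥ ŵ ≥ 3 satisfy ŵ ≤ 3w/(w-2) and w ≥ ŵ·(sqrt(4ŵ - 3) - 1)/2. Then ŵ ≤ 3 + sqrt(2). -/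
/-! Put `t = ŵ - 3` and `s = √(4ŵ - 3)`, so `s² = 4t + 9`. Inverting the decreasing bound gives
`w t ≤ 2ŵ`; inserting the cubic bound `ŵ (s - 1) / 2 ≤ w` leaves `s t ≤ t + 4`. Squaring,
`(4t + 9) t² ≤ (t + 4)²`, which factors as `4 (t + 2) (t² - 2) ≤ 0`, hence `t ≤ √2`. -/

open Real

lemma two_lt_of_three_le_mul_div_sub_two {w : ℝ} (h : 3 ≤ 3 * w / (w - 2)) : 2 < w := by
  by_contra! hw
  rcases hw.lt_or_eq with hw | rfl
  · rw [le_div_iff_of_neg (by linarith)] at h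
    linarith
  · norm_num at h

lemma mul_sub_three_le_of_le_mul_div_sub_two {w x : ℝ} (hx : 3 ≤ x)
    (h : x ≤ 3 * w / (w - 2)) : w * (x - 3) ≤ 2 * x := by
  have hw := two_lt_of_three_le_mul_div_sub_two (hx.trans h)
  rw [le_div_iff₀ (by linarith)] at h
  linarith

lemma le_three_add_sqrt_two_of_sqrt_sub_one_mul_le {x : ℝ} (hx : 3 ≤ x)
    (h : (√(4 * x - 3) - 1) * (x - 3) ≤ 4) : x ≤ 3 + √2 := by
  set t := x - 3
  set s := √(4 * x - 3)
  have ht0 : 0 ≤ t := by linarith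
  have hs : s ^ 2 = 4 * t + 9 := by rw [sq_sqrt (by linarith)]; ring
  have hst : s * t ≤ t + 4 := by linarith
  have hsq : (4 * t + 9) * t ^ 2 ≤ (t + 4) ^ 2 := by
    rw [← hs, ← mul_pow]
    exact pow_le_pow_left₀ (by positivity) hst 2
  have hfactor : (t + 2) * (t ^ 2 - 2) ≤ 0 := by nlinarith
  have : t ^ 2 ≤ 2 := by
    nlinarith [nonpos_of_mul_nonpos_right hfactor (by linarith : (0 : ℝ) < t + 2)]
  linarith [le_sqrt_of_sq_le this]

theorem stmt8_general (w wh : ℝ) (h2 : (3 : ℝ) ≤ wh)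
    (h3 : wh ≤ 3 * w / (w - 2))
    (h4 : wh * (Real.sqrt (4 * wh - 3) - 1) / 2 ≤ w) :
    wh ≤ 3 + Real.sqrt 2 := by
  refine le_three_add_sqrt_two_of_sqrt_sub_one_mul_le h2 ?_
  have hw := mul_sub_three_le_of_le_mul_div_sub_two h2 h3
  have hwh : wh * ((√(4 * wh - 3) - 1) * (wh - 3)) ≤ wh * 4 := by
    nlinarith [mul_le_mul_of_nonneg_right h4 (by linarith : (0 : ℝ) ≤ wh - 3)]
  exact le_of_mul_le_mul_left hwh (by linarith)

theorem stmt8 (w wh : ℝ) (h1 : wh ≤ w) (h2 : (3 : ℝ) ≤ wh)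
    (h3 : wh ≤ 3 * w / (w - 2))
    (h4 : wh * (Real.sqrt (4 * wh - 3) - 1) / 2 ≤ w) :
    wh ≤ 3 + Real.sqrt 2 :=
  stmt8_general w wh h2 h3 h4
end
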